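/- Let (u_t)_{t ∈ (0,1]} be a family of bounded operators on H with u_t* u_t = id_H for all t, such that: u₁ = id_H; t ↦ u_t is continuous on (0,1) in the operator norm; u_t → id_H and u_t* → id_H strongly as t → 1; and u_t u_t* → 0 strongly as t → 0. Define Φ(U,t) = (id_H − u_t u_t*) + u_t U u_t* for a unitary U and t ∈ (0,1], and Φ(U,0) = id_H. Then Φ(U,t) is unitary for every unitary U and every t ∈ [0,1], Φ(U,1) = U, Φ(U,0) = id_H, and the map Φ : 𝒰(H) × [0,1] → 𝒰(H) is jointly continuous when the unitary group 𝒰(H) carries the strong operator topology on both the domain and the codomain. -/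

import Mathlib

/-! For an isometry `a` (`a* a = 1`), `x ↦ (1 - a a*) + a x a*` is a unital `*`-homomorphism, so
`Φ(·, t)` preserves unitaries. For continuity, `Φ(U, t) h = h - u_t u_t* h + u_t U u_t* h` is built
by composing strongly continuous, uniformly bounded operator families, and composition is jointly
strongly continuous on bounded sets. At `t = 0` the isometry gives `‖u_t* h‖ = ‖u_t u_t* h‖ → 0`,
so `Φ(U, t) h → h` uniformly in the unitary `U`. -/

open Filter Topology Set ContinuousLinearMap

/-- The strong operator topology on the unitary group of `H`. -/
noncomputable def unitarySOT (H : Type*) [NormedAddCommGroup H] [InnerProductSpace ℂ H]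
    [CompleteSpace H] : TopologicalSpace ↥(unitary (H →L[ℂ] H)) :=
  TopologicalSpace.induced (fun u => ((u : H →L[ℂ] H) : H → H))
    (inferInstance : TopologicalSpace (H → H))

open Function

section StarRing

variable {R : Type*} [Ring R] [StarRing R]

/-- `a x a*` on the range of `a`, extended by the identity on its complement. -/
def extendConj (a x : R) : R := 1 - a * star a + a * x * star a

@[simp] theorem extendConj_zero_left (x : R) : extendConj 0 x = 1 := by simp [extendConj]

@[simp] theorem extendConj_one_left (x : R) : extendConj 1 x = x := by simp [extendConj]

@[simp] theorem extendConj_one (a : R) : extendConj a 1 = 1 := by simp [extendConj]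

theorem star_extendConj (a x : R) : star (extendConj a x) = extendConj a (star x) := by
  simp [extendConj, mul_assoc]

theorem extendConj_mul {a : R} (ha : star a * a = 1) (x y : R) :
    extendConj a (x * y) = extendConj a x * extendConj a y := by
  have hcancel : ∀ z : R, star a * (a * z) = z := fun z => by rw [← mul_assoc, ha, one_mul]
  simp only [extendConj, sub_mul, mul_sub, add_mul, mul_add, one_mul, mul_one, mul_assoc, hcancel]
  abel

def extendConjHom (a : R) (ha : star a * a = 1) : R →⋆* R where
  toFun := extendConj a
  map_one' := extendConj_one a
  map_mul' := extendConj_mul ha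
  map_star' x := (star_extendConj a x).symm

theorem extendConj_mem_unitary {a x : R} (ha : star a * a = 1) (hx : x ∈ unitary R) :
    extendConj a x ∈ unitary R :=
  Unitary.map_mem (extendConjHom a ha) hx

end StarRing

theorem Filter.Tendsto.clm_apply_of_isBoundedUnder {α 𝕜 E F : Type*} [NontriviallyNormedField 𝕜]
    [NormedAddCommGroup E] [NormedSpace 𝕜 E] [NormedAddCommGroup F] [NormedSpace 𝕜 F]
    {l : Filter α} {T : α → E →L[𝕜] F} {x : α → E} {x₀ : E} {z : F}
    (hT : Tendsto (fun a => T a x₀) l (𝓝 z)) (hx : Tendsto x l (𝓝 x₀))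
    (hb : IsBoundedUnder (· ≤ ·) l ((‖·‖) ∘ T)) :
    Tendsto (fun a => T a (x a)) l (𝓝 z) := by
  have hsmall : Tendsto (fun a => T a (x a - x₀)) l (𝓝 0) :=
    (tendsto_sub_nhds_zero_iff.2 hx).op_zero_isBoundedUnder_le hb (fun v S => S v)
      fun v S => (S.le_opNorm v).trans_eq (mul_comm _ _)
  simpa using hT.add hsmall

theorem ContinuousOn.insert_of_continuousWithinAt {X Y : Type*} [TopologicalSpace X] [T1Space X]
    [TopologicalSpace Y] {f : X → Y} {s : Set X} {a : X} (hf : ContinuousOn f s)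
    (ha : ContinuousWithinAt f s a) : ContinuousOn f (insert a s) := by
  rintro x (rfl | hx)
  · exact ha.insert
  · exact (hf x hx).insert'

section Normed

variable {𝕜 E F : Type*} [NontriviallyNormedField 𝕜] [NormedAddCommGroup E] [NormedSpace 𝕜 E]
  [NormedAddCommGroup F] [NormedSpace 𝕜 F]

theorem opNorm_le_one_of_norm_map {A : E →L[𝕜] F} (hA : ∀ x, ‖A x‖ = ‖x‖) : ‖A‖ ≤ 1 :=
  opNorm_le_bound _ zero_le_one fun x => by rw [hA, one_mul]

theorem continuousOn_Ioc_apply_of_tendsto_one {v : ℝ → E →L[𝕜] E} (hv1 : v 1 = 1)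
    (hv : ContinuousOn v (Ioo 0 1)) {y : E} (hy : Tendsto (fun t => v t y) (𝓝[Ioo 0 1] 1) (𝓝 y)) :
    ContinuousOn (fun t => v t y) (Ioc 0 1) := by
  rw [← Ioo_insert_right zero_lt_one]
  exact (hv.clm_apply continuousOn_const).insert_of_continuousWithinAt
    (by simpa [ContinuousWithinAt, hv1] using hy)

theorem continuousWithinAt_update_zero_apply {u : ℝ → E →L[𝕜] F} {y : E}
    (hu : ContinuousOn (fun t => u t y) (Ioc 0 1)) {t₀ : ℝ} (ht₀ : t₀ ∈ Ioc 0 1) :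
    ContinuousWithinAt (fun t => update u 0 0 t y) (Icc 0 1) t₀ := by
  rw [← Ioc_insert_left zero_le_one, continuousWithinAt_insert]
  exact (hu t₀ ht₀).congr (fun t ht => by rw [update_of_ne ht.1.ne'])
    (by rw [update_of_ne ht₀.1.ne'])

end Normed

section Hilbert

variable {𝕜 E : Type*} [RCLike 𝕜] [NormedAddCommGroup E] [InnerProductSpace 𝕜 E] [CompleteSpace E]

theorem extendConj_apply (A X : E →L[𝕜] E) (h : E) :
    extendConj A X h = h - A (adjoint A h) + A (X (adjoint A h)) := by
  simp [extendConj, star_eq_adjoint]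

theorem tendsto_extendConj_apply {α : Type*} {l : Filter α} {V W : α → E →L[𝕜] E}
    {V₀ W₀ : E →L[𝕜] E} (hV : ∀ y, Tendsto (fun a => V a y) l (𝓝 (V₀ y)))
    (hW : ∀ y, Tendsto (fun a => W a y) l (𝓝 (W₀ y)))
    (hW' : ∀ y, Tendsto (fun a => adjoint (W a) y) l (𝓝 (adjoint W₀ y)))
    (hVb : IsBoundedUnder (· ≤ ·) l ((‖·‖) ∘ V)) (hWb : IsBoundedUnder (· ≤ ·) l ((‖·‖) ∘ W))
    (h : E) : Tendsto (fun a => extendConj (W a) (V a) h) l (𝓝 (extendConj W₀ V₀ h)) := by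
  have hproj := Tendsto.clm_apply_of_isBoundedUnder (hW _) (hW' h) hWb
  have hconj := Tendsto.clm_apply_of_isBoundedUnder (hW _)
    (Tendsto.clm_apply_of_isBoundedUnder (hV _) (hW' h) hVb) hWb
  simpa only [extendConj_apply] using (tendsto_const_nhds.sub hproj).add hconj

theorem tendsto_extendConj_apply_of_tendsto_zero {α : Type*} {l : Filter α} {V W : α → E →L[𝕜] E}
    {h : E} (hW' : Tendsto (fun a => adjoint (W a) h) l (𝓝 0))
    (hVb : IsBoundedUnder (· ≤ ·) l ((‖·‖) ∘ V)) (hWb : IsBoundedUnder (· ≤ ·) l ((‖·‖) ∘ W)) :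
    Tendsto (fun a => extendConj (W a) (V a) h) l (𝓝 h) := by
  have hzero : ∀ T : α → E →L[𝕜] E, IsBoundedUnder (· ≤ ·) l ((‖·‖) ∘ T) →
      ∀ x : α → E, Tendsto x l (𝓝 0) → Tendsto (fun a => T a (x a)) l (𝓝 0) :=
    fun T hT x hx => Tendsto.clm_apply_of_isBoundedUnder
      (tendsto_const_nhds.congr fun a => (map_zero (T a)).symm) hx hT
  simpa only [extendConj_apply, sub_zero, add_zero] using
    (tendsto_const_nhds.sub (hzero W hWb _ hW')).add (hzero W hWb _ (hzero V hVb _ hW'))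

theorem continuous_extendConj_apply {X : Type*} [TopologicalSpace X] {V : X → E →L[𝕜] E}
    {τ : X → ℝ} {w : ℝ → E →L[𝕜] E} {s : Set ℝ} {C D : ℝ}
    (hV : ∀ y, Continuous fun a => V a y) (hVb : ∀ a, ‖V a‖ ≤ C)
    (hτ : Continuous τ) (hτs : ∀ a, τ a ∈ s)
    (hw : ∀ y, ∀ t ∈ s, w t ≠ 0 → ContinuousWithinAt (fun t => w t y) s t)
    (hw' : ∀ y, ContinuousOn (fun t => adjoint (w t) y) s) (hwb : ∀ t ∈ s, ‖w t‖ ≤ D)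
    (h : E) : Continuous fun a => extendConj (w (τ a)) (V a) h := by
  refine continuous_iff_continuousAt.2 fun a₀ => ?_
  have hτ' : Tendsto τ (𝓝 a₀) (𝓝[s] τ a₀) :=
    tendsto_nhdsWithin_iff.2 ⟨hτ.continuousAt, .of_forall hτs⟩
  have hVb' : IsBoundedUnder (· ≤ ·) (𝓝 a₀) ((‖·‖) ∘ V) :=
    isBoundedUnder_of ⟨C, hVb⟩
  have hwb' : IsBoundedUnder (· ≤ ·) (𝓝 a₀) ((‖·‖) ∘ w ∘ τ) :=
    isBoundedUnder_of ⟨D, fun a => hwb _ (hτs a)⟩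
  by_cases h₀ : w (τ a₀) = 0
  · rw [ContinuousAt, h₀, extendConj_zero_left, one_apply_eq_self]
    refine tendsto_extendConj_apply_of_tendsto_zero ?_ hVb' hwb'
    simpa [h₀, Function.comp_def] using (hw' h _ (hτs a₀)).tendsto.comp hτ'
  · exact tendsto_extendConj_apply (fun y => (hV y).continuousAt)
      (fun y => (hw y _ (hτs a₀) h₀).tendsto.comp hτ')
      (fun y => (hw' y _ (hτs a₀)).tendsto.comp hτ') hVb' hwb' h

variable {u : ℝ → E →L[𝕜] E}

theorem norm_update_zero_le_one (hiso : ∀ t ∈ Ioc (0 : ℝ) 1, adjoint (u t) ∘L u t = 1) :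
    ∀ t ∈ Icc (0 : ℝ) 1, ‖update u 0 0 t‖ ≤ 1 := by
  rintro t ⟨ht0, ht1⟩
  rcases ht0.eq_or_lt with rfl | ht0
  · simp
  · rw [update_of_ne ht0.ne']
    exact opNorm_le_one_of_norm_map <| (norm_map_iff_adjoint_comp_self _).2 (hiso t ⟨ht0, ht1⟩)

theorem continuousOn_adjoint_update_zero_apply
    (hiso : ∀ t ∈ Ioc (0 : ℝ) 1, adjoint (u t) ∘L u t = 1) {y : E}
    (hu' : ContinuousOn (fun t => adjoint (u t) y) (Ioc 0 1))
    (h0 : Tendsto (fun t => u t (adjoint (u t) y)) (𝓝[Ioo 0 1] 0) (𝓝 0)) :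
    ContinuousOn (fun t => adjoint (update u 0 0 t) y) (Icc 0 1) := by
  have hupdate : EqOn (fun t => adjoint (update u 0 0 t) y) (fun t => adjoint (u t) y) (Ioc 0 1) :=
    fun t ht => by simp only [update_of_ne ht.1.ne']
  rw [← Ioc_insert_left zero_le_one]
  refine (hu'.congr hupdate).insert_of_continuousWithinAt ?_
  rw [← Ioo_insert_right zero_lt_one, continuousWithinAt_insert, ContinuousWithinAt,
    update_self, map_zero, zero_apply]
  -- `u t` is an isometry, so `‖(u t)* y‖ = ‖u t (u t)* y‖`
  have hnorm : (fun t => ‖u t (adjoint (u t) y)‖) =ᶠ[𝓝[Ioo 0 1] 0] fun t => ‖adjoint (u t) y‖ := by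
    filter_upwards [self_mem_nhdsWithin] with t ht
    exact (norm_map_iff_adjoint_comp_self _).2 (hiso t ⟨ht.1, ht.2.le⟩) _
  refine (tendsto_zero_iff_norm_tendsto_zero.2 <|
    (tendsto_zero_iff_norm_tendsto_zero.1 h0).congr' hnorm).congr' ?_
  filter_upwards [self_mem_nhdsWithin] with t ht
  exact (hupdate ⟨ht.1, ht.2.le⟩).symm

end Hilbert

theorem stmt12_general {H : Type*} [NormedAddCommGroup H] [InnerProductSpace ℂ H]
    [CompleteSpace H]
    (u : ℝ → H →L[ℂ] H)
    (hiso : ∀ t ∈ Set.Ioc (0 : ℝ) 1, adjoint (u t) ∘L u t = 1)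
    (hone : u 1 = 1)
    (hcont : ContinuousOn u (Set.Ioo 0 1))
    (hstrong1 : ∀ h : H, Tendsto (fun t => u t h) (nhdsWithin 1 (Set.Ioo (0 : ℝ) 1)) (nhds h))
    (hstrong1' : ∀ h : H, Tendsto (fun t => adjoint (u t) h)
      (nhdsWithin 1 (Set.Ioo (0 : ℝ) 1)) (nhds h))
    (hstrong0 : ∀ h : H, Tendsto (fun t => u t (adjoint (u t) h))
      (nhdsWithin 0 (Set.Ioo (0 : ℝ) 1)) (nhds 0))
    (Φ : (H →L[ℂ] H) → ℝ → (H →L[ℂ] H))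
    (hΦ : ∀ U : H →L[ℂ] H, ∀ t ∈ Set.Ioc (0 : ℝ) 1,
      Φ U t = (1 - u t ∘L adjoint (u t)) + u t ∘L U ∘L adjoint (u t))
    (hΦ0 : ∀ U : H →L[ℂ] H, Φ U 0 = 1) :
    (∀ U ∈ unitary (H →L[ℂ] H), ∀ t ∈ Set.Icc (0 : ℝ) 1, Φ U t ∈ unitary (H →L[ℂ] H)) ∧
    (∀ U : H →L[ℂ] H, Φ U 1 = U) ∧
    @Continuous (↥(unitary (H →L[ℂ] H)) × Set.Icc (0 : ℝ) 1) (H → H)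
      (@instTopologicalSpaceProd _ _ (unitarySOT H) inferInstance)
      (inferInstance : TopologicalSpace (H → H))
      (fun p => fun h : H => Φ (p.1 : H →L[ℂ] H) (p.2 : ℝ) h) := by
  -- `Φ(U, 0) = 1 = extendConj 0 U`, so with `u 0 := 0` we get `Φ(·, t) = extendConj (u t)`
  have hΦw : ∀ U, ∀ t ∈ Icc (0 : ℝ) 1, Φ U t = extendConj (update u 0 0 t) U := by
    rintro U t ⟨ht0, ht1⟩
    rcases ht0.eq_or_lt with rfl | ht0
    · simp [hΦ0]
    · rw [hΦ U t ⟨ht0, ht1⟩, update_of_ne ht0.ne']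
      rfl
  refine ⟨fun U hU t ht => ?_, fun U => ?_, ?_⟩
  · rcases ht.1.eq_or_lt with rfl | ht0
    · simp [hΦ0]
    · rw [hΦw U t ht, update_of_ne ht0.ne']
      exact extendConj_mem_unitary (hiso t ⟨ht0, ht.2⟩) hU
  · rw [hΦw U 1 ⟨zero_le_one, le_rfl⟩, update_of_ne one_ne_zero, hone, extendConj_one_left]
  let := unitarySOT H
  have hu (y : H) : ContinuousOn (fun t => u t y) (Ioc 0 1) :=
    continuousOn_Ioc_apply_of_tendsto_one hone hcont (hstrong1 y)
  have hu' (y : H) : ContinuousOn (fun t => adjoint (u t) y) (Ioc 0 1) :=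
    continuousOn_Ioc_apply_of_tendsto_one (by rw [comp_apply, hone, ← star_eq_adjoint, star_one])
      ((adjoint (𝕜 := ℂ) (E := H) (F := H)).continuous.comp_continuousOn hcont) (hstrong1' y)
  have hev (y : H) : Continuous fun V : unitary (H →L[ℂ] H) => (V : H →L[ℂ] H) y :=
    (continuous_apply y).comp continuous_induced_dom
  refine continuous_pi fun h => ?_
  simp only [hΦw _ _ (Subtype.prop _)]
  exact continuous_extendConj_apply (fun y => (hev y).comp continuous_fst)
    (fun p => opNorm_le_one_of_norm_map (norm_map_of_mem_unitary p.1.2))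
    (continuous_subtype_val.comp continuous_snd) (fun p => p.2.2)
    (fun y t ht hne => continuousWithinAt_update_zero_apply (hu y)
      ⟨ht.1.lt_of_ne' (by rintro rfl; exact hne (update_self ..)), ht.2⟩)
    (fun y => continuousOn_adjoint_update_zero_apply hiso (hu' y) (hstrong0 y))
    (norm_update_zero_le_one hiso) h

/-- Given a family `u t` of isometric embeddings as in the Dixmier–Douady construction,
the map `Φ(U, t) = (id - u_t u_t*) + u_t U u_t*` (with `Φ(U, 0) = id`) takes unitary
values on `[0,1]`, satisfies `Φ(U, 1) = U`, and is jointly continuous in the strong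
operator topology on `𝒰(H) × [0,1]`. -/
theorem stmt12 {H : Type*} [NormedAddCommGroup H] [InnerProductSpace ℂ H]
    [CompleteSpace H] [TopologicalSpace.SeparableSpace H]
    (_hinf : ¬FiniteDimensional ℂ H)
    (u : ℝ → H →L[ℂ] H)
    (hiso : ∀ t ∈ Set.Ioc (0 : ℝ) 1, adjoint (u t) ∘L u t = 1)
    (hone : u 1 = 1)
    (hcont : ContinuousOn u (Set.Ioo 0 1))
    (hstrong1 : ∀ h : H, Tendsto (fun t => u t h) (nhdsWithin 1 (Set.Ioo (0 : ℝ) 1)) (nhds h))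
    (hstrong1' : ∀ h : H, Tendsto (fun t => adjoint (u t) h)
      (nhdsWithin 1 (Set.Ioo (0 : ℝ) 1)) (nhds h))
    (hstrong0 : ∀ h : H, Tendsto (fun t => u t (adjoint (u t) h))
      (nhdsWithin 0 (Set.Ioo (0 : ℝ) 1)) (nhds 0))
    (Φ : (H →L[ℂ] H) → ℝ → (H →L[ℂ] H))
    (hΦ : ∀ U : H →L[ℂ] H, ∀ t ∈ Set.Ioc (0 : ℝ) 1,
      Φ U t = (1 - u t ∘L adjoint (u t)) + u t ∘L U ∘L adjoint (u t))
    (hΦ0 : ∀ U : H →L[ℂ] H, Φ U 0 = 1) :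
    (∀ U ∈ unitary (H →L[ℂ] H), ∀ t ∈ Set.Icc (0 : ℝ) 1, Φ U t ∈ unitary (H →L[ℂ] H)) ∧
    (∀ U : H →L[ℂ] H, Φ U 1 = U) ∧
    @Continuous (↥(unitary (H →L[ℂ] H)) × Set.Icc (0 : ℝ) 1) (H → H)
      (@instTopologicalSpaceProd _ _ (unitarySOT H) inferInstance)
      (inferInstance : TopologicalSpace (H → H))
      (fun p => fun h : H => Φ (p.1 : H →L[ℂ] H) (p.2 : ℝ) h) :=
  stmt12_general u hiso hone hcont hstrong1 hstrong1' hstrong0 Φ hΦ hΦ0
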